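/- Let T be a bounded operator on a complex Hilbert space and r ≥ 1 a real number. Then w(T)^(2r) ≤ (1/2)·(w(T²)^r + ‖T‖^(2r)); moreover the bound (1/2)·w(T²)^r + (1/2^(r+1))·‖T T* + T* T‖^r is at most (1/2)·w(T²)^r + (1/2)·‖T‖^(2r), i.e., (1/2^(r+1))·‖T T* + T* T‖^r ≤ (1/2)·‖T‖^(2r). -/

import Mathlib

open scoped InnerProductSpace
open ContinuousLinearMap
noncomputable section
set_option synthInstance.maxHeartbeats 1000000
set_option maxHeartbeats 1000000

variable {H : Type*} [NormedAddCommGroup H] [InnerProductSpace ℂ H] [CompleteSpace H]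

/-- The numerical radius of a bounded operator. -/
noncomputable def numRadius (T : H →L[ℂ] H) : ℝ :=
  sSup {r : ℝ | ∃ x : H, ‖x‖ = 1 ∧ r = ‖(⟪T x, x⟫_ℂ)‖}

/-- The 2×2 block operator [[X, Y],[Z, W]] on H ⊕ H (ℓ² direct sum). -/
noncomputable def blockOp (X Y Z W : H →L[ℂ] H) :
    WithLp 2 (H × H) →L[ℂ] WithLp 2 (H × H) :=
  ((WithLp.prodContinuousLinearEquiv 2 ℂ H H).symm.toContinuousLinearMap) ∘L
    ((X ∘L ContinuousLinearMap.fst ℂ H H + Y ∘L ContinuousLinearMap.snd ℂ H H).prod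
      (Z ∘L ContinuousLinearMap.fst ℂ H H + W ∘L ContinuousLinearMap.snd ℂ H H)) ∘L
    ((WithLp.prodContinuousLinearEquiv 2 ℂ H H).toContinuousLinearMap)

/-!
Buzano's inequality `2 ‖⟪a, e⟫‖ ‖⟪e, b⟫‖ ≤ ‖a‖ ‖b‖ + ‖⟪a, b⟫‖` for a unit vector `e`, applied to
`e = x`, `a = T x`, `b = T† x`, gives `2 ‖⟪T x, x⟫‖² ≤ ‖T‖² + ‖⟪T² x, x⟫‖`, hence
`w(T)² ≤ (w(T²) + ‖T‖²) / 2`; the first inequality follows by raising this to the power `r` and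
using convexity of `t ↦ t ^ r`. The second is the triangle inequality together with the
C⋆-identities `‖T T†‖ = ‖T† T‖ = ‖T‖²`.
-/

theorem two_mul_norm_inner_mul_norm_inner_le {𝕜 E : Type*} [RCLike 𝕜] [NormedAddCommGroup E]
    [InnerProductSpace 𝕜 E] {e : E} (he : ‖e‖ = 1) (a b : E) :
    2 * (‖⟪a, e⟫_𝕜‖ * ‖⟪e, b⟫_𝕜‖) ≤ ‖a‖ * ‖b‖ + ‖⟪a, b⟫_𝕜‖ := by
  -- reflecting `a` in the line through `e` preserves its norm
  set c := (𝕜 ∙ e).reflection a with hc_def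
  have hc : ⟪c, b⟫_𝕜 = 2 * (⟪a, e⟫_𝕜 * ⟪e, b⟫_𝕜) - ⟪a, b⟫_𝕜 := by
    rw [hc_def, Submodule.reflection_apply, Submodule.starProjection_unit_singleton 𝕜 he,
      inner_sub_left, two_smul, inner_add_left, inner_smul_left, inner_conj_symm]
    ring
  calc 2 * (‖⟪a, e⟫_𝕜‖ * ‖⟪e, b⟫_𝕜‖) = ‖⟪c, b⟫_𝕜 + ⟪a, b⟫_𝕜‖ := by
        rw [hc, sub_add_cancel, norm_mul, norm_mul, RCLike.norm_two]
    _ ≤ ‖c‖ * ‖b‖ + ‖⟪a, b⟫_𝕜‖ :=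
        (norm_add_le _ _).trans (by gcongr; exact norm_inner_le_norm _ _)
    _ = ‖a‖ * ‖b‖ + ‖⟪a, b⟫_𝕜‖ := by rw [LinearIsometryEquiv.norm_map]

theorem norm_mul_star_add_star_mul_le {A : Type*} [NormedRing A] [StarRing A] [CStarRing A]
    (a : A) : ‖a * star a + star a * a‖ ≤ 2 * ‖a‖ ^ 2 :=
  calc ‖a * star a + star a * a‖ ≤ ‖a * star a‖ + ‖star a * a‖ := norm_add_le _ _
    _ = 2 * ‖a‖ ^ 2 := by rw [CStarRing.norm_self_mul_star, CStarRing.norm_star_mul_self]; ring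

theorem Real.add_div_two_rpow_le {a b p : ℝ} (ha : 0 ≤ a) (hb : 0 ≤ b) (hp : 1 ≤ p) :
    ((a + b) / 2) ^ p ≤ (a ^ p + b ^ p) / 2 := by
  calc ((a + b) / 2) ^ p = (1 / 2 * a + 1 / 2 * b) ^ p := by ring_nf
    _ ≤ 1 / 2 * a ^ p + 1 / 2 * b ^ p := by
        simpa only [smul_eq_mul] using (convexOn_rpow hp).2 (Set.mem_Ici.2 ha) (Set.mem_Ici.2 hb)
          (by norm_num : (0 : ℝ) ≤ 1 / 2) (by norm_num : (0 : ℝ) ≤ 1 / 2) (by norm_num)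
    _ = (a ^ p + b ^ p) / 2 := by ring

theorem Real.rpow_two_mul {x : ℝ} (hx : 0 ≤ x) (y : ℝ) : x ^ (2 * y) = (x ^ 2) ^ y := by
  exact_mod_cast Real.rpow_natCast_mul hx 2 y

theorem ContinuousLinearMap.two_mul_norm_inner_apply_self_sq_le (T : H →L[ℂ] H) {x : H}
    (hx : ‖x‖ = 1) : 2 * ‖⟪T x, x⟫_ℂ‖ ^ 2 ≤ ‖T‖ ^ 2 + ‖⟪(T ^ 2) x, x⟫_ℂ‖ := by
  have hbuzano := two_mul_norm_inner_mul_norm_inner_le (𝕜 := ℂ) hx (T x) (adjoint T x)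
  rw [adjoint_inner_right, adjoint_inner_right] at hbuzano
  have hT : ‖T x‖ ≤ ‖T‖ := by simpa [hx] using T.le_opNorm x
  have hTadj : ‖adjoint T x‖ ≤ ‖T‖ := by
    simpa [hx, LinearIsometryEquiv.norm_map] using (adjoint T).le_opNorm x
  calc 2 * ‖⟪T x, x⟫_ℂ‖ ^ 2 ≤ ‖T x‖ * ‖adjoint T x‖ + ‖⟪(T ^ 2) x, x⟫_ℂ‖ := by
        rw [sq, pow_two T]; exact hbuzano
    _ ≤ ‖T‖ ^ 2 + ‖⟪(T ^ 2) x, x⟫_ℂ‖ := by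
        rw [sq ‖T‖]; gcongr

section

variable {E : Type*} [NormedAddCommGroup E] [InnerProductSpace ℂ E]

theorem numRadius_nonneg (T : E →L[ℂ] E) : 0 ≤ numRadius T :=
  Real.sSup_nonneg fun _ ⟨_, _, hr⟩ ↦ hr ▸ norm_nonneg _

theorem norm_inner_apply_self_le_numRadius (T : E →L[ℂ] E) {x : E} (hx : ‖x‖ = 1) :
    ‖⟪T x, x⟫_ℂ‖ ≤ numRadius T := by
  refine le_csSup ⟨‖T‖, ?_⟩ ⟨x, hx, rfl⟩
  rintro _ ⟨y, hy, rfl⟩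
  calc ‖⟪T y, y⟫_ℂ‖ ≤ ‖T y‖ * ‖y‖ := norm_inner_le_norm _ _
    _ ≤ ‖T‖ := by simpa [hy] using T.le_opNorm y

theorem numRadius_le {T : E →L[ℂ] E} {c : ℝ} (hc : 0 ≤ c)
    (h : ∀ x : E, ‖x‖ = 1 → ‖⟪T x, x⟫_ℂ‖ ≤ c) : numRadius T ≤ c :=
  Real.sSup_le (fun _ ⟨x, hx, hr⟩ ↦ hr ▸ h x hx) hc

end

theorem sq_numRadius_le (T : H →L[ℂ] H) :
    numRadius T ^ 2 ≤ (numRadius (T ^ 2) + ‖T‖ ^ 2) / 2 := by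
  have hB : 0 ≤ (numRadius (T ^ 2) + ‖T‖ ^ 2) / 2 := by
    have := numRadius_nonneg (T ^ 2); positivity
  refine (Real.le_sqrt (numRadius_nonneg T) hB).1 (numRadius_le (Real.sqrt_nonneg _) fun x hx ↦ ?_)
  refine (Real.le_sqrt (norm_nonneg _) hB).2 ?_
  linarith [T.two_mul_norm_inner_apply_self_sq_le hx, norm_inner_apply_self_le_numRadius (T ^ 2) hx]

theorem numRadius_pow_two_r_weaker_ineq (T : H →L[ℂ] H) (r : ℝ) (hr : 1 ≤ r) :
    numRadius T ^ (2 * r) ≤ (1 / 2) * (numRadius (T ^ 2) ^ r + ‖T‖ ^ (2 * r)) ∧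
      (1 / 2 ^ (r + 1)) * ‖T * adjoint T + adjoint T * T‖ ^ r ≤
        (1 / 2) * ‖T‖ ^ (2 * r) := by
  have hr0 : 0 ≤ r := zero_le_one.trans hr
  rw [Real.rpow_two_mul (numRadius_nonneg T), Real.rpow_two_mul (norm_nonneg T)]
  constructor
  · calc (numRadius T ^ 2) ^ r ≤ ((numRadius (T ^ 2) + ‖T‖ ^ 2) / 2) ^ r := by
          gcongr; exact sq_numRadius_le T
      _ ≤ (numRadius (T ^ 2) ^ r + (‖T‖ ^ 2) ^ r) / 2 :=
          Real.add_div_two_rpow_le (numRadius_nonneg _) (sq_nonneg _) hr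
      _ = _ := by ring
  · have hnorm : ‖T * adjoint T + adjoint T * T‖ ≤ 2 * ‖T‖ ^ 2 := by
      simpa only [star_eq_adjoint] using norm_mul_star_add_star_mul_le T
    calc (1 / 2 ^ (r + 1)) * ‖T * adjoint T + adjoint T * T‖ ^ r
        ≤ (1 / 2 ^ (r + 1)) * (2 * ‖T‖ ^ 2) ^ r := by gcongr
      _ = (1 / 2) * (‖T‖ ^ 2) ^ r := by
          rw [Real.mul_rpow zero_le_two (sq_nonneg _), Real.rpow_add_one two_ne_zero]
          field_simp
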